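/- arXiv:1101.4715 — 5 statements merged into one kernel-verified Lean document; each statement's English description precedes it below -/
import Mathlib

section
/- Let p be a prime number and let A be a subset of Z_p \ {0} with |A| = ℓ. Then |Σ°(A)| ≥ min(p, 2ℓ − 1 + ε(ℓ)), where ε(0) = 2, ε(1) = 1, and ε(ℓ) = 0 for ℓ ≥ 2. -/
open Finset

/-- The set of all nonempty subset sums of a finite set `A`. -/
def nss {G : Type*} [AddCommGroup G] [DecidableEq G] (A : Finset G) : Finset G :=
  (A.powerset.erase ∅).image fun B => B.sum id

/-!
Write `X = Σ°(A)`. For `x ∈ A` we have `X = S ∪ (S + x)` with `S = Σ°(A \ {x})`, so if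
`|X| ≤ 2|A| - 2` then by induction `X` has at most one more element than `S`, hence `X + x` leaves
`X` in at most one point and `X` is an arithmetic progression of difference `-x`. A progression of
length `n` with `2 ≤ n ≤ p - 2` has this property only for the differences `±d`, so `A ⊆ {x, -x}`,
contradicting `|A| ≥ 3`. When `2|A| > p`, every `t` is a sum `b + (t - b)` of two distinct elements
of `A ∪ {0}` by pigeonhole.
-/

section AddCommMonoid

variable {G : Type*} [AddCommMonoid G] [DecidableEq G]

def subsetSums (A : Finset G) : Finset G :=
  A.powerset.image fun B => ∑ x ∈ B, x

lemma mem_subsetSums {A : Finset G} {x : G} : x ∈ subsetSums A ↔ ∃ B ⊆ A, ∑ y ∈ B, y = x := by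
  simp [subsetSums]

lemma insert_zero_subset_subsetSums (A : Finset G) : insert 0 A ⊆ subsetSums A := by
  intro x hx
  rcases mem_insert.1 hx with rfl | hx
  · exact mem_subsetSums.2 ⟨∅, empty_subset A, sum_empty⟩
  · exact mem_subsetSums.2 ⟨{x}, singleton_subset_iff.2 hx, sum_singleton id x⟩

lemma card_add_one_le_card_subsetSums {A : Finset G} (h0 : (0 : G) ∉ A) :
    #A + 1 ≤ #(subsetSums A) :=
  card_insert_of_notMem h0 ▸ card_le_card (insert_zero_subset_subsetSums A)

lemma add_mem_subsetSums {A : Finset G} {x y : G} (hx : x ∈ A) (hy : y ∈ A) (hxy : x ≠ y) :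
    x + y ∈ subsetSums A :=
  mem_subsetSums.2 ⟨{x, y}, insert_subset hx (singleton_subset_iff.2 hy), sum_pair hxy⟩

lemma subsetSums_insert {A : Finset G} {a : G} (ha : a ∉ A) :
    subsetSums (insert a A) = subsetSums A ∪ (subsetSums A).image (· + a) := by
  rw [subsetSums, powerset_insert, image_union, image_image, subsetSums, image_image]
  congr 1
  refine image_congr fun B hB => ?_
  rw [Function.comp_apply, sum_insert fun h => ha (mem_powerset.1 hB h), add_comm]
  rfl

lemma subsetSums_insert_zero (A : Finset G) : subsetSums (insert 0 A) = subsetSums A := by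
  by_cases h : (0 : G) ∈ A
  · rw [insert_eq_of_mem h]
  · simp [subsetSums_insert h]

lemma card_image_add_sdiff_union_le (S : Finset G) (x : G) :
    #((S ∪ S.image (· + x)).image (· + x) \ (S ∪ S.image (· + x))) ≤ #(S.image (· + x) \ S) := by
  refine le_trans (card_le_card fun z hz => ?_) (card_image_le (f := (· + x)))
  obtain ⟨hz, hzX⟩ := mem_sdiff.1 hz
  obtain ⟨y, hy, rfl⟩ := mem_image.1 hz
  have hyS : y ∉ S := fun h => hzX (mem_union_right _ (mem_image_of_mem _ h))
  exact mem_image_of_mem _ (mem_sdiff.2 ⟨(mem_union.1 hy).resolve_left hyS, hyS⟩)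

end AddCommMonoid

lemma insert_zero_nss {G : Type*} [AddCommGroup G] [DecidableEq G] (A : Finset G) :
    insert 0 (nss A) = subsetSums A := by
  rw [nss, subsetSums, ← insert_erase (empty_mem_powerset A), image_insert]
  simp

lemma Finset.eq_range_card_of_sub_one_mem {s : Finset ℕ} (h : ∀ n ∈ s, n ≠ 0 → n - 1 ∈ s) :
    s = range #s := by
  have hdown : ∀ n ∈ s, range (n + 1) ⊆ s := by
    intro n hn
    induction n with
    | zero => simpa using hn
    | succ n ih =>
      rw [range_add_one]
      exact insert_subset hn (ih (h _ hn n.succ_ne_zero))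
  refine eq_of_subset_of_card_le (fun n hn => mem_range.2 ?_) (by simp)
  simpa using card_le_card (hdown n hn)

section ZModPrime

variable {p : ℕ}

def arithProg (T d : ZMod p) (n : ℕ) : Finset (ZMod p) :=
  (range n).image fun j : ℕ => T + j * d

variable [Fact p.Prime]

lemma add_natCast_mul_inj {T d : ZMod p} (hd : d ≠ 0) {i j : ℕ} (hi : i < p) (hj : j < p) :
    T + i * d = T + j * d ↔ i = j := by
  rw [add_right_inj, mul_left_inj' hd, ZMod.natCast_eq_natCast_iff', Nat.mod_eq_of_lt hi,
    Nat.mod_eq_of_lt hj]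

lemma two_le_val {c : ZMod p} (h0 : c ≠ 0) (h1 : c ≠ 1) : 2 ≤ c.val := by
  have : c.val ≠ 0 := (ZMod.val_ne_zero c).2 h0
  have : c.val ≠ 1 := fun h => h1 (ZMod.val_injective p (h.trans (ZMod.val_one p).symm))
  omega

lemma val_add_two_le {c : ZMod p} (h : c ≠ -1) : c.val + 2 ≤ p := by
  have hlt := ZMod.val_lt c
  have : c.val ≠ p - 1 := by
    intro hc
    apply h
    rw [← ZMod.natCast_zmod_val c, hc, Nat.cast_sub (Fact.out : p.Prime).one_le]
    simp
  omega

lemma exists_eq_arithProg_of_card_image_add_sdiff_le_one {X : Finset (ZMod p)} {a : ZMod p}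
    (ha : a ≠ 0) (h : #(X.image (· + a) \ X) ≤ 1) : ∃ T, X = arithProg T (-a) #X := by
  obtain ⟨T, hT⟩ : ∃ T, ∀ y ∈ X, y + a ∉ X → y = T := by
    by_cases hex : ∃ y ∈ X, y + a ∉ X
    · obtain ⟨y, hy, hya⟩ := hex
      have hmem : ∀ z ∈ X, z + a ∉ X → z + a ∈ X.image (· + a) \ X := fun z hz hza =>
        mem_sdiff.2 ⟨mem_image_of_mem _ hz, hza⟩
      exact ⟨y, fun z hz hza =>
        add_right_cancel (card_le_one.1 h _ (hmem z hz hza) _ (hmem y hy hya))⟩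
    · exact ⟨0, fun y hy hya => (hex ⟨y, hy, hya⟩).elim⟩
  let idx : ZMod p → ℕ := fun y => ((T - y) / a).val
  have hidx : ∀ y, T + (idx y : ZMod p) * -a = y := by
    intro y
    simp only [idx, ZMod.natCast_zmod_val]
    field_simp
    ring
  have hinj : Function.Injective idx := fun y z hyz => by
    rw [← hidx y, ← hidx z, hyz]
  have hrange : X.image idx = range #X := by
    rw [← card_image_of_injective X hinj]
    refine eq_range_card_of_sub_one_mem ?_
    simp only [mem_image, forall_exists_index, and_imp]
    rintro _ y hy rfl hy0
    have hyT : y ≠ T := by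
      rintro rfl
      simp [idx] at hy0
    have hya : y + a ∈ X := by
      by_contra hya
      exact hyT (hT y hy hya)
    refine ⟨y + a, hya, ?_⟩
    have hval : (T - (y + a)) / a = (T - y) / a - 1 := by
      field_simp
      ring
    simp only [idx, hval]
    rw [ZMod.val_sub (by rw [ZMod.val_one]; exact Nat.one_le_iff_ne_zero.2 hy0), ZMod.val_one]
  refine ⟨T, ?_⟩
  rw [arithProg, ← hrange, image_image]
  conv_lhs => rw [← image_id (s := X)]
  exact image_congr fun y _ => (hidx y).symm

lemma two_le_card_image_add_sdiff_arithProg {T d b : ZMod p} (hd : d ≠ 0) {n : ℕ} (hn : 2 ≤ n)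
    (hnp : n + 2 ≤ p) (hb0 : b ≠ 0) (hbd : b ≠ d) (hbnd : b ≠ -d) :
    2 ≤ #((arithProg T d n).image (· + b) \ arithProg T d n) := by
  set k := (b / d).val
  have hk : 2 ≤ k := two_le_val (div_ne_zero hb0 hd) fun h => hbd ((div_eq_one_iff_eq hd).1 h)
  have hkp : k + 2 ≤ p := val_add_two_le fun h => hbnd (by rwa [div_eq_iff hd, neg_one_mul] at h)
  have hb : b = k * d := by
    rw [ZMod.natCast_zmod_val, div_mul_cancel₀ b hd]
  -- `u` and `u + 1` are at least `n`, while `u - k` and `u + 1 - k` are still below `n`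
  set u := max n k
  have hmem : ∀ i, u ≤ i → i ≤ u + 1 →
      T + i * d ∈ (arithProg T d n).image (· + b) \ arithProg T d n := by
    intro i hui hiu
    refine mem_sdiff.2 ⟨mem_image.2 ⟨T + (i - k : ℕ) * d, ?_, ?_⟩, ?_⟩
    · exact mem_image_of_mem _ (mem_range.2 (by omega))
    · rw [hb, Nat.cast_sub (by omega)]
      ring
    · simp only [arithProg, mem_image, mem_range, not_exists, not_and]
      intro j hj hji
      rw [add_natCast_mul_inj hd (by omega) (by omega)] at hji
      omega
  calc 2 = #{T + u * d, T + (u + 1 : ℕ) * d} := by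
        rw [card_pair (by rw [Ne, add_natCast_mul_inj hd (by omega) (by omega)]; omega)]
    _ ≤ _ := card_le_card (insert_subset (hmem u le_rfl (by omega))
        (singleton_subset_iff.2 (hmem (u + 1) (by omega) le_rfl)))

lemma card_le_two_of_forall_card_image_add_sdiff_le_one {A X : Finset (ZMod p)}
    (h0 : (0 : ZMod p) ∉ A) (hX : 2 ≤ #X) (hXp : #X + 2 ≤ p)
    (h : ∀ x ∈ A, #(X.image (· + x) \ X) ≤ 1) : #A ≤ 2 := by
  rcases A.eq_empty_or_nonempty with rfl | ⟨a, ha⟩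
  · simp
  have ha0 : a ≠ 0 := ne_of_mem_of_not_mem ha h0
  obtain ⟨T, hT⟩ := exists_eq_arithProg_of_card_image_add_sdiff_le_one ha0 (h a ha)
  have hA : A ⊆ {a, -a} := fun b hb => by
    by_contra hab
    simp only [mem_insert, mem_singleton, not_or] at hab
    have := two_le_card_image_add_sdiff_arithProg (T := T) (neg_ne_zero.2 ha0) hX hXp
      (ne_of_mem_of_not_mem hb h0) hab.2 (by rw [neg_neg]; exact hab.1)
    rw [← hT] at this
    have := h b hb
    omega
  exact (card_le_card hA).trans card_le_two

lemma subsetSums_eq_univ {A : Finset (ZMod p)} (h0 : (0 : ZMod p) ∉ A) (hA : p < 2 * #A) :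
    subsetSums A = univ := by
  set B := insert 0 A
  have hB : #B = #A + 1 := card_insert_of_notMem h0
  have hBp : #B ≤ p := (card_le_univ B).trans_eq (ZMod.card p)
  have h2 : (2 : ZMod p) ≠ 0 := by
    intro h
    have := Nat.le_of_dvd two_pos ((ZMod.natCast_eq_zero_iff 2 p).1 (by exact_mod_cast h))
    omega
  refine eq_univ_of_forall fun t => ?_
  have hinter : 1 < #(B ∩ B.image (t - ·)) := by
    have := card_union_add_card_inter B (B.image (t - ·))
    have := (card_le_univ (B ∪ B.image (t - ·))).trans_eq (ZMod.card p)
    rw [card_image_of_injective B sub_right_injective] at *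
    omega
  -- `B ∩ (t - B)` has two elements, and at most one of them is its own partner `t - b`
  obtain ⟨c, hc, hcpair, hne⟩ : ∃ c ∈ B, t - c ∈ B ∧ c ≠ t - c := by
    have hpair : ∀ b ∈ B ∩ B.image (t - ·), b ∈ B ∧ t - b ∈ B := fun b hb => by
      obtain ⟨hb, hb'⟩ := mem_inter.1 hb
      obtain ⟨b', hb', rfl⟩ := mem_image.1 hb'
      simpa using And.intro hb hb'
    obtain ⟨b, hb, b', hb', hbb'⟩ := one_lt_card.1 hinter
    by_contra! hfix
    apply hbb'
    have e1 := hfix b (hpair b hb).1 (hpair b hb).2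
    have e2 := hfix b' (hpair b' hb').1 (hpair b' hb').2
    exact mul_left_cancel₀ h2 (by linear_combination e1 - e2)
  rw [← subsetSums_insert_zero]
  simpa using add_mem_subsetSums hc hcpair hne

lemma min_le_card_subsetSums_of_forall_erase {A : Finset (ZMod p)} (h0 : (0 : ZMod p) ∉ A)
    (hA : 3 ≤ #A) (hind : ∀ x ∈ A, min p (2 * #A - 3) ≤ #(subsetSums (A.erase x))) :
    min p (2 * #A - 1) ≤ #(subsetSums A) := by
  by_cases hpA : p < 2 * #A
  · rw [subsetSums_eq_univ h0 hpA, card_univ, ZMod.card]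
    exact min_le_left _ _
  have hXA := card_add_one_le_card_subsetSums h0
  set X := subsetSums A
  rw [min_eq_right (by omega)]
  by_contra! hX
  have hgrowth : ∀ x ∈ A, #(X.image (· + x) \ X) ≤ 1 := by
    intro x hx
    have hS := hind x hx
    rw [min_eq_right (by omega)] at hS
    set S := subsetSums (A.erase x)
    have hXS : X = S ∪ S.image (· + x) := by
      rw [← subsetSums_insert (notMem_erase x A), insert_erase hx]
    have := card_sdiff_add_card (S.image (· + x)) S
    rw [union_comm, ← hXS] at this
    have := card_image_add_sdiff_union_le S x
    rw [← hXS] at this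
    omega
  have := card_le_two_of_forall_card_image_add_sdiff_le_one h0 (by omega) (by omega) hgrowth
  omega

theorem min_le_card_subsetSums {A : Finset (ZMod p)} (h0 : (0 : ZMod p) ∉ A) (hA : 2 ≤ #A) :
    min p (2 * #A - 1) ≤ #(subsetSums A) := by
  induction A using Finset.strongInduction with
  | H A ih =>
  have hXA := card_add_one_le_card_subsetSums h0
  rcases hA.eq_or_lt with h2 | h3
  · have := min_le_right p (2 * #A - 1)
    omega
  refine min_le_card_subsetSums_of_forall_erase h0 h3 fun x hx => ?_
  have := ih (A.erase x) (erase_ssubset hx) (fun h => h0 (mem_of_mem_erase h))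
    (by rw [card_erase_of_mem hx]; omega)
  rwa [card_erase_of_mem hx, show 2 * (#A - 1) - 1 = 2 * #A - 3 by omega] at this

end ZModPrime

theorem stmt12 {p : ℕ} (hp : p.Prime) (A : Finset (ZMod p)) (hA0 : (0 : ZMod p) ∉ A)
    (ℓ : ℕ) (hℓ : A.card = ℓ) :
    min p (2 * ℓ + (if ℓ = 0 then 2 else if ℓ = 1 then 1 else 0) - 1) ≤
      (insert (0 : ZMod p) (nss A)).card := by
  have := Fact.mk hp
  subst hℓ
  rw [insert_zero_nss]
  have hXA := card_add_one_le_card_subsetSums hA0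
  rcases lt_or_ge #A 2 with hA | hA
  · have := min_le_right p (2 * #A + (if #A = 0 then 2 else if #A = 1 then 1 else 0) - 1)
    interval_cases h : #A <;> simp_all
  · rw [if_neg (by omega), if_neg (by omega), add_zero]
    exact min_le_card_subsetSums hA0 hA
end

section
/- Let p be a prime number and let T be a sequence (multiset) of elements of Z_p \ {0} of length |T| ≥ 2. Then |Σ°(T)| ≥ min(p, |T| + 1). Moreover, equality holds only if |T| ≥ p − 1, or there exists g ∈ Z_p \ {0} such that every element of T lies in {g, −g}. -/
/-
Adjoining an element `a` to a sequence turns `Σ°(T)` into `{0, a} + Σ°(T)`, so for `a ≠ 0`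
Cauchy–Davenport makes `|Σ°|` grow by at least one (until it reaches `p`) with every element.
Starting from `Σ°(∅) = {0}` this gives the bound. If `T` contains `a` and `b` with `b ≠ ±a`,
start instead from `Σ°(a·b) = {0, a, b, a + b}`, of size four: then `|Σ°(T)| ≥ min(p, |T| + 2)`,
which exceeds `min(p, |T| + 1)` unless `|T| ≥ p - 1`.
-/

def msums {G : Type*} [AddCommMonoid G] (T : Multiset G) : Set G :=
  {x | ∃ S : Multiset G, S ≤ T ∧ S ≠ 0 ∧ S.sum = x}

open Pointwise

section

variable {G : Type*}

theorem insert_zero_msums_zero [AddCommMonoid G] : insert 0 (msums (0 : Multiset G)) = {0} := by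
  simp [msums]

theorem insert_zero_msums_cons [AddCommMonoid G] (a : G) (T : Multiset G) :
    insert 0 (msums (a ::ₘ T)) = {0, a} + insert 0 (msums T) := by
  classical
  ext x
  simp only [msums, Set.mem_add, Set.mem_insert_iff, Set.mem_singleton_iff, Set.mem_ofPred_eq]
  constructor
  · rintro (rfl | ⟨S, hS, hS0, rfl⟩)
    · exact ⟨0, .inl rfl, 0, .inl rfl, zero_add 0⟩
    by_cases haS : a ∈ S
    · refine ⟨a, .inr rfl, (S.erase a).sum, ?_, ?_⟩
      · rcases eq_or_ne (S.erase a) 0 with h0 | h0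
        · simp [h0]
        · exact .inr ⟨S.erase a, by simpa using Multiset.erase_le_erase a hS, h0, rfl⟩
      · rw [← Multiset.sum_cons, Multiset.cons_erase haS]
    · exact ⟨0, .inl rfl, S.sum, .inr ⟨S, (Multiset.le_cons_of_notMem haS).mp hS, hS0, rfl⟩,
        zero_add _⟩
  · rintro ⟨y, rfl | rfl, z, rfl | ⟨S, hS, hS0, rfl⟩, rfl⟩
    · exact .inl (zero_add 0)
    · exact .inr ⟨S, hS.trans (Multiset.le_cons_self T a), hS0, (zero_add _).symm⟩
    · exact .inr ⟨{y}, Multiset.singleton_le.mpr (Multiset.mem_cons_self y T), by simp, by simp⟩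
    · exact .inr ⟨y ::ₘ S, Multiset.cons_le_cons y hS, by simp, by simp⟩

theorem insert_zero_msums_pair [AddCommGroup G] (a b : G) :
    insert 0 (msums {a, b}) = {0, a, b, a + b} := by
  rw [Multiset.insert_eq_cons, insert_zero_msums_cons, ← Multiset.cons_zero,
    insert_zero_msums_cons, insert_zero_msums_zero]
  simp only [Set.insert_eq, Set.union_add, Set.add_union, Set.singleton_add_singleton, add_zero,
    zero_add]
  ext x; simp only [Set.mem_union, Set.mem_singleton_iff]; tauto

theorem ncard_insert_zero_msums_pair [AddCommGroup G] {a b : G} (ha : a ≠ 0) (hb : b ≠ 0)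
    (hba : b ≠ a) (hba' : b ≠ -a) : (insert 0 (msums {a, b})).ncard = 4 := by
  have hab : a + b ≠ 0 := fun h => hba' (eq_neg_of_add_eq_zero_right h)
  rw [insert_zero_msums_pair, Set.ncard_insert_of_notMem, Set.ncard_insert_of_notMem,
    Set.ncard_pair] <;> simp [ha, hb, hba.symm, ha.symm, hb.symm, hab.symm]

end

theorem ZMod.min_ncard_add_one_le_ncard_pair_add {p : ℕ} (hp : p.Prime) {a : ZMod p} (ha : a ≠ 0)
    {A : Set (ZMod p)} (hA : A.Nonempty) : min p (A.ncard + 1) ≤ ({0, a} + A).ncard := by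
  have : Fact p.Prime := ⟨hp⟩
  obtain ⟨s, rfl⟩ := A.toFinite.exists_finset_coe
  have hpair : ({0, a} : Set (ZMod p)) = ↑({0, a} : Finset (ZMod p)) := by simp
  rw [hpair, ← Finset.coe_add, Set.ncard_coe_finset, Set.ncard_coe_finset]
  have := ZMod.cauchy_davenport hp (s := {0, a}) (t := s) (by simp) (by simpa using hA)
  rwa [Finset.card_pair ha.symm, add_comm 2, Nat.add_sub_assoc one_le_two] at this

theorem ZMod.min_ncard_add_card_le_ncard_msums_add {p : ℕ} (hp : p.Prime) {R : Multiset (ZMod p)}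
    (hR : (0 : ZMod p) ∉ R) (S : Multiset (ZMod p)) :
    min p ((insert 0 (msums S)).ncard + Multiset.card R) ≤ (insert 0 (msums (R + S))).ncard := by
  induction R using Multiset.induction_on with
  | empty => simp
  | cons c R ih =>
    have hc : c ≠ 0 := ne_of_mem_of_not_mem (Multiset.mem_cons_self c R) hR
    specialize ih fun h => hR (Multiset.mem_cons_of_mem h)
    have step := ZMod.min_ncard_add_one_le_ncard_pair_add hp hc
      (A := insert 0 (msums (R + S))) (Set.insert_nonempty _ _)
    rw [Multiset.cons_add, insert_zero_msums_cons, Multiset.card_cons]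
    omega

theorem stmt13_general {p : ℕ} (hp : p.Prime) (T : Multiset (ZMod p))
    (hT0 : (0 : ZMod p) ∉ T) :
    min p (Multiset.card T + 1) ≤ (insert (0 : ZMod p) (msums T)).ncard ∧
      ((insert (0 : ZMod p) (msums T)).ncard = min p (Multiset.card T + 1) →
        p - 1 ≤ Multiset.card T ∨
          ∃ g : ZMod p, g ≠ 0 ∧ ∀ x ∈ T, x = g ∨ x = -g) := by
  have : Fact p.Prime := ⟨hp⟩
  have lower := ZMod.min_ncard_add_card_le_ncard_msums_add hp hT0 0
  rw [insert_zero_msums_zero, Set.ncard_singleton, add_zero, add_comm] at lower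
  refine ⟨lower, fun heq => ?_⟩
  by_contra! ⟨hsmall, hnot⟩
  obtain ⟨a, haT, -⟩ := hnot 1 one_ne_zero
  have ha : a ≠ 0 := ne_of_mem_of_not_mem haT hT0
  obtain ⟨b, hbT, hba, hba'⟩ := hnot a ha
  have hb : b ≠ 0 := ne_of_mem_of_not_mem hbT hT0
  set R := (T.erase a).erase b
  have hTR : T = R + {a, b} := by
    rw [Multiset.insert_eq_cons, Multiset.add_cons, ← Multiset.cons_zero, Multiset.add_cons,
      add_zero, Multiset.cons_erase ((Multiset.mem_erase_of_ne hba).mpr hbT),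
      Multiset.cons_erase haT]
  have upper := ZMod.min_ncard_add_card_le_ncard_msums_add hp (R := R)
    (fun h => hT0 (Multiset.mem_of_mem_erase (Multiset.mem_of_mem_erase h))) {a, b}
  rw [← hTR, ncard_insert_zero_msums_pair ha hb hba hba'] at upper
  have hcard : Multiset.card T = Multiset.card R + 2 := by rw [hTR]; simp
  omega

theorem stmt13 {p : ℕ} (hp : p.Prime) (T : Multiset (ZMod p))
    (hT0 : (0 : ZMod p) ∉ T) (hT : 2 ≤ Multiset.card T) :
    min p (Multiset.card T + 1) ≤ (insert (0 : ZMod p) (msums T)).ncard ∧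
      ((insert (0 : ZMod p) (msums T)).ncard = min p (Multiset.card T + 1) →
        p - 1 ≤ Multiset.card T ∨
          ∃ g : ZMod p, g ≠ 0 ∧ ∀ x ∈ T, x = g ∨ x = -g) :=
  stmt13_general hp T hT0
end

section
/- Let G be a finite abelian group, and let A be a subset of G \ {0} of cardinality cr(G) − 1 such that Σ(A) ≠ G. If A' is a complete subset of A (i.e., a nonempty subset with Σ(A') = ⟨A'⟩), then A ∩ ⟨A'⟩ = ⟨A'⟩ \ {0}. -/
/-!
If `z ∈ ⟨A'⟩ \ A` were nonzero, then `A ∪ {z}` would avoid `0` and have `cr G` elements, so it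
would span `G`. But `z` adds no new subset sums: for `C ⊆ A`, split `C` into its part inside `A'`
and the rest; the part inside `A'` plus `z` lies in `⟨A'⟩ = Σ(A')`, so it is a subset sum of `A'`,
disjoint from the rest. Hence `Σ(A) = G`, a contradiction.
-/

open Finset

/-- The critical number of a finite abelian group `G`. -/
noncomputable def cr (G : Type*) [AddCommGroup G] [Fintype G] [DecidableEq G] : ℕ :=
  sInf {ℓ : ℕ | 0 < ℓ ∧ ∀ A : Finset G, (0 : G) ∉ A → ℓ ≤ A.card → nss A = Finset.univ}

section

variable {G : Type*} [AddCommGroup G] [DecidableEq G]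

lemma mem_nss {A : Finset G} {y : G} :
    y ∈ nss A ↔ ∃ B ⊆ A, B.Nonempty ∧ B.sum id = y := by
  simp only [nss, mem_image, mem_erase, mem_powerset, ← nonempty_iff_ne_empty]
  exact ⟨fun ⟨B, ⟨hne, hBA⟩, hy⟩ => ⟨B, hBA, hne, hy⟩,
    fun ⟨B, hBA, hne, hy⟩ => ⟨B, ⟨hne, hBA⟩, hy⟩⟩

lemma sum_add_mem_nss_of_mem_closure {S A C : Finset G} {x : G}
    (hS : (AddSubgroup.closure (S : Set G) : Set G) ⊆ nss S) (hSA : S ⊆ A) (hCA : C ⊆ A)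
    (hx : x ∈ AddSubgroup.closure (S : Set G)) : C.sum id + x ∈ nss A := by
  have hin : (C.filter (· ∈ S)).sum id + x ∈ AddSubgroup.closure (S : Set G) :=
    add_mem (AddSubgroup.sum_mem _ fun a ha =>
      AddSubgroup.subset_closure (mem_filter.mp ha).2) hx
  obtain ⟨B, hBS, hBne, hB⟩ := mem_nss.mp (hS hin)
  have hdisj : Disjoint (C.filter (· ∉ S)) B :=
    disjoint_left.mpr fun a ha haB => (mem_filter.mp ha).2 (hBS haB)
  refine mem_nss.mpr ⟨C.filter (· ∉ S) ∪ B,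
    union_subset ((filter_subset _ _).trans hCA) (hBS.trans hSA),
    hBne.mono subset_union_right, ?_⟩
  rw [sum_union hdisj, hB, ← sum_filter_add_sum_filter_not C (· ∈ S) id]
  abel

lemma nss_insert_subset_of_mem_closure {S A : Finset G} {x : G}
    (hS : (AddSubgroup.closure (S : Set G) : Set G) ⊆ nss S) (hSA : S ⊆ A)
    (hx : x ∈ AddSubgroup.closure (S : Set G)) : nss (insert x A) ⊆ nss A := fun y hy => by
  obtain ⟨B, hB, hBne, rfl⟩ := mem_nss.mp hy
  by_cases hxB : x ∈ B
  · rw [← sum_erase_add B id hxB]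
    exact sum_add_mem_nss_of_mem_closure hS hSA (subset_insert_iff.mp hB) hx
  · exact mem_nss.mpr ⟨B, (subset_insert_iff_of_notMem hxB).mp hB, hBne, rfl⟩

end

lemma nss_eq_univ_of_cr_le_card {G : Type*} [AddCommGroup G] [Fintype G] [DecidableEq G]
    {A : Finset G} (hA0 : (0 : G) ∉ A) (hA : cr G ≤ A.card) : nss A = univ := by
  have hmem : cr G ∈ {ℓ : ℕ | 0 < ℓ ∧ ∀ A : Finset G, (0 : G) ∉ A → ℓ ≤ A.card →
      nss A = univ} := by
    refine Nat.sInf_mem ⟨Fintype.card G, Fintype.card_pos, fun B hB0 hB => ?_⟩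
    exact absurd hB (not_le.mpr (card_lt_univ_of_notMem hB0))
  exact hmem.2 A hA0 hA

theorem stmt14_general {G : Type*} [AddCommGroup G] [Fintype G] [DecidableEq G]
    (A A' : Finset G) (hA0 : (0 : G) ∉ A) (hcard : A.card = cr G - 1)
    (hns : nss A ≠ Finset.univ)
    (hsub : A' ⊆ A)
    (hcomplete : (nss A' : Set G) = (AddSubgroup.closure (A' : Set G) : Set G)) :
    (A : Set G) ∩ (AddSubgroup.closure (A' : Set G) : Set G) =
      (AddSubgroup.closure (A' : Set G) : Set G) \ {0} := by
  ext z
  refine ⟨fun ⟨hzA, hz⟩ => ⟨hz, fun h => hA0 (h ▸ hzA)⟩, fun ⟨hz, hz0⟩ => ⟨?_, hz⟩⟩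
  by_contra hzA
  have h0 : (0 : G) ∉ insert z A := by
    simpa [eq_comm, hA0] using hz0
  have hspan : nss (insert z A) = univ := by
    refine nss_eq_univ_of_cr_le_card h0 ?_
    rw [card_insert_of_notMem hzA]
    omega
  refine hns (eq_univ_of_forall fun y => ?_)
  exact nss_insert_subset_of_mem_closure hcomplete.ge hsub hz (hspan ▸ mem_univ y)

theorem stmt14 {G : Type*} [AddCommGroup G] [Fintype G] [DecidableEq G]
    (A A' : Finset G) (hA0 : (0 : G) ∉ A) (hcard : A.card = cr G - 1)
    (hns : nss A ≠ Finset.univ)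
    (hsub : A' ⊆ A) (hne : A'.Nonempty)
    (hcomplete : (nss A' : Set G) = (AddSubgroup.closure (A' : Set G) : Set G)) :
    (A : Set G) ∩ (AddSubgroup.closure (A' : Set G) : Set G) =
      (AddSubgroup.closure (A' : Set G) : Set G) \ {0} :=
  stmt14_general A A' hA0 hcard hns hsub hcomplete
end

section
/- Let p and q be odd prime numbers with p + ⌊2√(p − 2)⌋ + 1 < q < 2p + 3, let G = Z_{pq}, and let K be the subgroup of G of order p. Let g ∈ G \ K, and let A ⊆ K ∪ (g + K) ∪ (−g + K) be a subset of G with |A| = p + q − 3 and A ∩ K = K \ {0}. Then Σ(A) ≠ G. -/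
/-!
Project to the quotient `ℤ/pq ⧸ K ≅ ℤ/q`. Exactly `q - 2` elements of `A` lie outside `K`, and each
of them maps to `±ḡ`, so every subset sum maps to `t • ḡ` with `t` ranging over an interval of
only `q - 1` consecutive integers. Some residue class mod `q` is therefore missed, and with it a
whole coset of `K`.
-/

open Finset

theorem exists_subset_sum_eq_of_mem_nss {G : Type*} [AddCommGroup G] [DecidableEq G]
    {A : Finset G} {s : G} (hs : s ∈ nss A) : ∃ B ⊆ A, B.sum id = s := by
  obtain ⟨B, hB, rfl⟩ := mem_image.mp hs
  exact ⟨B, mem_powerset.mp (mem_of_mem_erase hB), rfl⟩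

theorem Finset.sum_mem_Icc_of_subset {ι α : Type*} [AddCommGroup α] [Lattice α]
    [IsOrderedAddMonoid α] {B A : Finset ι} (hBA : B ⊆ A) (c : ι → α) :
    ∑ i ∈ B, c i ∈ Set.Icc (-∑ i ∈ A, (c i)⁻) (∑ i ∈ A, (c i)⁺) := by
  rw [← sum_congr rfl fun i _ => posPart_sub_negPart (c i), sum_sub_distrib]
  have hpos : ∑ i ∈ B, (c i)⁺ ≤ ∑ i ∈ A, (c i)⁺ :=
    sum_le_sum_of_subset_of_nonneg hBA fun i _ _ => posPart_nonneg _
  have hneg : ∑ i ∈ B, (c i)⁻ ≤ ∑ i ∈ A, (c i)⁻ :=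
    sum_le_sum_of_subset_of_nonneg hBA fun i _ _ => negPart_nonneg _
  constructor
  · calc -∑ i ∈ A, (c i)⁻ ≤ 0 - ∑ i ∈ B, (c i)⁻ := by rw [zero_sub]; exact neg_le_neg hneg
      _ ≤ _ := sub_le_sub_right (sum_nonneg fun i _ => posPart_nonneg _) _
  · exact (sub_le_self _ (sum_nonneg fun i _ => negPart_nonneg _)).trans hpos

theorem exists_zsmul_forall_map_nss_ne {G H : Type*} [AddCommGroup G] [DecidableEq G]
    [AddCommGroup H] (π : G →+ H) (x : H) (c : G → ℤ) (A : Finset G)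
    (hc : ∀ a ∈ A, π a = c a • x) (hA : ∑ a ∈ A, |c a| + 1 < addOrderOf x) :
    ∃ m : ℤ, ∀ s ∈ nss A, π s ≠ m • x := by
  -- Subset sums have coefficients in `[-∑ c⁻, ∑ c⁺]`, so `m - ∑_B c` stays in `[1, ∑ |c| + 1]`
  -- for `m = ∑ c⁺ + 1`: positive and below the order of `x`.
  refine ⟨∑ a ∈ A, (c a)⁺ + 1, fun s hs hπs => ?_⟩
  obtain ⟨B, hBA, rfl⟩ := exists_subset_sum_eq_of_mem_nss hs
  have hπB : π (B.sum id) = (∑ b ∈ B, c b) • x := by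
    rw [map_sum, sum_smul]
    exact sum_congr rfl fun b hb => hc b (hBA hb)
  have hdvd : (addOrderOf x : ℤ) ∣ ∑ a ∈ A, (c a)⁺ + 1 - ∑ b ∈ B, c b :=
    addOrderOf_dvd_iff_zsmul_eq_zero.mpr (by rw [sub_zsmul, ← hπB, hπs, add_neg_cancel])
  obtain ⟨hlo, hhi⟩ := sum_mem_Icc_of_subset hBA c
  have habs : ∑ a ∈ A, (c a)⁺ + ∑ a ∈ A, (c a)⁻ = ∑ a ∈ A, |c a| := by
    rw [← sum_add_distrib]
    exact sum_congr rfl fun a _ => posPart_add_negPart _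
  have := Int.le_of_dvd (by omega) hdvd
  omega

theorem Finset.card_filter_mem_add_one {α : Type*} (A : Finset α) (S : Set α)
    [DecidablePred (· ∈ S)] {a : α} (ha : a ∈ S) (h : ↑A ∩ S = S \ {a}) :
    #(A.filter (· ∈ S)) + 1 = S.ncard := by
  have hS : S ⊆ ↑A ∪ {a} := fun x hx => by
    by_cases hxa : x = a
    · exact Or.inr hxa
    · exact Or.inl (h ▸ ⟨hx, hxa⟩ : x ∈ ↑A ∩ S).1
  rw [← Set.ncard_coe_finset, coe_filter]
  change (↑A ∩ S).ncard + 1 = S.ncard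
  rw [h]
  exact Set.ncard_sdiff_singleton_add_one ha
    ((A.finite_toSet.union (Set.finite_singleton a)).subset hS)

theorem QuotientAddGroup.addOrderOf_mk_eq_index {G : Type*} [AddCommGroup G]
    {K : AddSubgroup G} {q : ℕ} (hq : q.Prime) (hK : K.index = q) {g : G} (hg : g ∉ K) :
    addOrderOf (g : G ⧸ K) = q := by
  have := Fact.mk hq
  refine addOrderOf_eq_prime ?_ (by simpa using hg)
  rw [← hK, K.index_eq_card]
  exact card_nsmul_eq_zero'

theorem QuotientAddGroup.exists_mk_eq_zsmul_of_subset {G : Type*} [AddCommGroup G]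
    (K : AddSubgroup G) (g : G) {S : Set G}
    (hS : S ⊆ (K : Set G) ∪ (fun h => g + h) '' (K : Set G) ∪ (fun h => -g + h) '' (K : Set G)) :
    ∃ c : G → ℤ, (∀ a ∈ S, (a : G ⧸ K) = c a • (g : G ⧸ K)) ∧ (∀ a ∈ K, c a = 0) ∧
      ∀ a ∉ K, |c a| = 1 := by
  classical
  refine ⟨fun a => if a ∈ K then 0 else if (a : G ⧸ K) = g then 1 else -1, ?_,
    fun a ha => if_pos ha, fun a ha => by simp only [if_neg ha]; split_ifs <;> rfl⟩
  intro a ha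
  by_cases haK : a ∈ K
  · simp [haK]
  have hcoset : (a : G ⧸ K) = g ∨ (a : G ⧸ K) = -g := by
    rcases hS ha with (h | ⟨k, hk, rfl⟩) | ⟨k, hk, rfl⟩
    · exact absurd h haK
    · left
      rw [QuotientAddGroup.mk_add, (QuotientAddGroup.eq_zero_iff k).mpr hk, add_zero]
    · right
      rw [QuotientAddGroup.mk_add, (QuotientAddGroup.eq_zero_iff k).mpr hk, add_zero,
        QuotientAddGroup.mk_neg]
  simp only [if_neg haK]
  split_ifs with h
  · rw [h, one_zsmul]
  · rw [hcoset.resolve_left h, neg_one_zsmul]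

theorem stmt15_general {p q : ℕ} (hp : p.Prime) (hq : q.Prime)
    (K : AddSubgroup (ZMod (p * q))) (hK : Nat.card K = p)
    (g : ZMod (p * q)) (hg : g ∉ K)
    (A : Finset (ZMod (p * q)))
    (hAsub : (A : Set (ZMod (p * q))) ⊆
      (K : Set (ZMod (p * q))) ∪ (fun h => g + h) '' (K : Set (ZMod (p * q))) ∪
        (fun h => -g + h) '' (K : Set (ZMod (p * q))))
    (hAcard : A.card = p + q - 3)
    (hAK : (A : Set (ZMod (p * q))) ∩ (K : Set (ZMod (p * q))) =
      (K : Set (ZMod (p * q))) \ {0}) :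
    (nss A : Set (ZMod (p * q))) ≠ Set.univ := by
  classical
  have hindex : K.index = q := by
    have := K.index_mul_card
    rw [hK, Nat.card_zmod] at this
    exact Nat.eq_of_mul_eq_mul_left hp.pos (by rw [mul_comm]; exact this)
  obtain ⟨c, hc, hcK, hcK'⟩ := QuotientAddGroup.exists_mk_eq_zsmul_of_subset K g hAsub
  have hinK : #(A.filter (· ∈ K)) + 1 = p :=
    (A.card_filter_mem_add_one (K : Set (ZMod (p * q))) K.zero_mem hAK).trans
      (by rw [← Nat.card_coe_set_eq]; exact hK)
  have hsum : ∑ a ∈ A, |c a| = #(A.filter (· ∉ K)) := by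
    rw [natCast_card_filter]
    refine sum_congr rfl fun a _ => ?_
    by_cases haK : a ∈ K
    · rw [hcK a haK, if_neg (not_not.mpr haK), abs_zero]
    · rw [hcK' a haK, if_pos haK]
  have hsplit := A.card_filter_add_card_filter_not (· ∈ K)
  obtain ⟨m, hm⟩ := exists_zsmul_forall_map_nss_ne (QuotientAddGroup.mk' K) g c A hc (by
    rw [hsum, QuotientAddGroup.addOrderOf_mk_eq_index hq hindex hg]
    have := hq.two_le; have := hp.two_le; omega)
  intro huniv
  have hmg : m • g ∈ (nss A : Set (ZMod (p * q))) := huniv ▸ Set.mem_univ _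
  exact hm (m • g) hmg (map_zsmul _ m g)

theorem stmt15 {p q : ℕ} (hp : p.Prime) (hq : q.Prime) (hpodd : Odd p) (hqodd : Odd q)
    (h1 : p + Nat.sqrt (4 * (p - 2)) + 1 < q) (h2 : q < 2 * p + 3)
    (K : AddSubgroup (ZMod (p * q))) (hK : Nat.card K = p)
    (g : ZMod (p * q)) (hg : g ∉ K)
    (A : Finset (ZMod (p * q)))
    (hAsub : (A : Set (ZMod (p * q))) ⊆
      (K : Set (ZMod (p * q))) ∪ (fun h => g + h) '' (K : Set (ZMod (p * q))) ∪
        (fun h => -g + h) '' (K : Set (ZMod (p * q))))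
    (hAcard : A.card = p + q - 3)
    (hAK : (A : Set (ZMod (p * q))) ∩ (K : Set (ZMod (p * q))) =
      (K : Set (ZMod (p * q))) \ {0}) :
    (nss A : Set (ZMod (p * q))) ≠ Set.univ :=
  stmt15_general hp hq K hK g hg A hAsub hAcard hAK
end

section
/- Let p and q be odd prime numbers with p < q ≤ p + ⌊2√(p − 2)⌋ + 1, let G = Z_{pq}, and let g ∈ G be an element of order pq. Let A = { ±g, ±2g, …, ±((p + q − 2)/2)·g }, so that |A| = p + q − 2. Then Σ(A) ≠ G. -/
/-!
Every element of `A` is `i • g` with `|i| ≤ k := (p + q - 2) / 2`, so every subset sum of `A` is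
`t • g` with `|t| ≤ 1 + 2 + ⋯ + k = k (k + 1) / 2`. Hence `|Σ(A)| ≤ k (k + 1) + 1`, and writing
`q = p + d` this is less than `p q` exactly when `(d - 1)² < 4 p - 3`, which is what the bound
`q ≤ p + ⌊2 √(p - 2)⌋ + 1` guarantees.
-/

open Finset

theorem Finset.exists_subset_sum_eq_of_subset_image {ι M : Type*} [Nonempty ι] [DecidableEq ι]
    [DecidableEq M] [AddCommMonoid M] {f : ι → M} {s : Finset ι} {B : Finset M}
    (hB : B ⊆ s.image f) : ∃ I ⊆ s, ∑ x ∈ B, x = ∑ i ∈ I, f i := by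
  have hinv : ∀ x ∈ B, f (Function.invFunOn f s x) = x := fun x hx =>
    Function.invFunOn_eq (by simpa using hB hx)
  refine ⟨B.image (Function.invFunOn f s), ?_, ?_⟩
  · intro i hi
    obtain ⟨x, hx, rfl⟩ := mem_image.1 hi
    exact Function.invFunOn_mem (by simpa using hB hx)
  · rw [sum_image fun x hx y hy h => by rw [← hinv x hx, ← hinv y hy, h]]
    exact sum_congr rfl fun x hx => (hinv x hx).symm

section MultiplesOfOneElement

variable {G : Type*} [AddCommGroup G] [DecidableEq G] (g : G) (k : ℕ)

theorem exists_sum_eq_nsmul_of_subset_image {B : Finset G}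
    (hB : B ⊆ (Icc 1 k).image (· • g)) :
    ∃ a ≤ ∑ i ∈ range (k + 1), i, ∑ x ∈ B, x = a • g := by
  obtain ⟨I, hI, hsum⟩ := exists_subset_sum_eq_of_subset_image hB
  refine ⟨∑ i ∈ I, i, sum_le_sum_of_subset fun i hi => ?_, by rw [hsum, sum_smul]⟩
  have := mem_Icc.1 (hI hi)
  exact mem_range.2 (by omega)

theorem exists_sum_eq_neg_nsmul_of_subset_image {B : Finset G}
    (hB : B ⊆ (Icc 1 k).image fun i : ℕ => -(i • g)) :
    ∃ b ≤ ∑ i ∈ range (k + 1), i, ∑ x ∈ B, x = -(b • g) := by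
  obtain ⟨b, hb, hsum⟩ := exists_sum_eq_nsmul_of_subset_image g k (B := B.image Neg.neg) <| by
    intro x hx
    obtain ⟨y, hy, rfl⟩ := mem_image.1 hx
    obtain ⟨i, hi, rfl⟩ := mem_image.1 (hB hy)
    exact mem_image.2 ⟨i, hi, (neg_neg _).symm⟩
  refine ⟨b, hb, ?_⟩
  rw [← hsum, sum_image fun x _ y _ h => neg_injective h, sum_neg_distrib, neg_neg]

theorem nss_subset_image_zsmul {A : Finset G}
    (hA : A ⊆ (Icc 1 k).image (· • g) ∪ (Icc 1 k).image fun i : ℕ => -(i • g)) :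
    nss A ⊆ (Icc (-(∑ i ∈ range (k + 1), i : ℕ) : ℤ) (∑ i ∈ range (k + 1), i : ℕ)).image
      (· • g) := by
  intro x hx
  obtain ⟨B, hB, rfl⟩ := mem_image.1 hx
  have hBA : B ⊆ A := mem_powerset.1 (mem_of_mem_erase hB)
  set P := (Icc 1 k).image (· • g)
  obtain ⟨a, ha, hPsum⟩ :=
    exists_sum_eq_nsmul_of_subset_image g k (B := B ∩ P) inter_subset_right
  obtain ⟨b, hb, hNsum⟩ := exists_sum_eq_neg_nsmul_of_subset_image g k (B := B \ P) fun y hy =>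
    (mem_union.1 (hA (hBA (mem_sdiff.1 hy).1))).resolve_left (mem_sdiff.1 hy).2
  refine mem_image.2 ⟨(a : ℤ) - b, mem_Icc.2 ⟨by omega, by omega⟩, ?_⟩
  rw [sub_zsmul, natCast_zsmul, natCast_zsmul, ← hPsum, ← hNsum]
  exact sum_inter_add_sum_sdiff B P id

theorem card_nss_le {A : Finset G}
    (hA : A ⊆ (Icc 1 k).image (· • g) ∪ (Icc 1 k).image fun i : ℕ => -(i • g)) :
    #(nss A) ≤ k * (k + 1) + 1 :=
  calc #(nss A)
      ≤ #(Icc (-(∑ i ∈ range (k + 1), i : ℕ) : ℤ) (∑ i ∈ range (k + 1), i : ℕ)) :=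
        (card_le_card (nss_subset_image_zsmul g k hA)).trans card_image_le
    _ = k * (k + 1) + 1 := by
        have := sum_range_id_mul_two (k + 1)
        rw [Nat.add_sub_cancel, Nat.mul_comm (k + 1)] at this
        rw [Int.card_Icc]
        omega

end MultiplesOfOneElement

theorem div_two_mul_succ_add_one_lt_mul_of_le_add_sqrt {p q : ℕ} (hpodd : Odd p) (hqodd : Odd q)
    (h1 : p < q) (h2 : q ≤ p + Nat.sqrt (4 * (p - 2)) + 1) :
    (p + q - 2) / 2 * ((p + q - 2) / 2 + 1) + 1 < p * q := by
  have hpmod := Nat.odd_iff.1 hpodd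
  have hqmod := Nat.odd_iff.1 hqodd
  set s := Nat.sqrt (4 * (p - 2))
  have hs : s * s ≤ 4 * (p - 2) := Nat.sqrt_le _
  -- parity forces `q ≥ p + 2`, so `s ≥ 1`, which rules out `p = 1`
  have hp3 : 3 ≤ p := by
    by_contra! hp3
    have : s = 0 := by simp [s, show p - 2 = 0 by omega]
    omega
  have hk : 2 * ((p + q - 2) / 2) = p + q - 2 := by omega
  have hd : (q - p - 1) * (q - p - 1) ≤ s * s := Nat.mul_self_le_mul_self (by omega)
  zify [h1.le, hp3.trans h1.le, show p + 1 ≤ q by omega, show 2 ≤ p + q by omega,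
    show 2 ≤ p by omega] at hk hd hs ⊢
  nlinarith

theorem stmt16_general {p q : ℕ} (hpodd : Odd p) (hqodd : Odd q)
    (h1 : p < q) (h2 : q ≤ p + Nat.sqrt (4 * (p - 2)) + 1)
    (g : ZMod (p * q))
    (A : Finset (ZMod (p * q)))
    (hA : A = (Finset.Icc 1 ((p + q - 2) / 2)).image (fun i : ℕ => i • g) ∪
              (Finset.Icc 1 ((p + q - 2) / 2)).image (fun i : ℕ => -(i • g))) :
    (nss A : Set (ZMod (p * q))) ≠ Set.univ := by
  have : NeZero (p * q) := ⟨Nat.mul_ne_zero hpodd.pos.ne' (hpodd.pos.trans h1).ne'⟩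
  intro huniv
  have hcard : #(nss A) = p * q := by
    rw [coe_eq_univ.1 huniv, card_univ, ZMod.card]
  have := card_nss_le g _ hA.le
  have := div_two_mul_succ_add_one_lt_mul_of_le_add_sqrt hpodd hqodd h1 h2
  omega

theorem stmt16 {p q : ℕ} (hp : p.Prime) (hq : q.Prime) (hpodd : Odd p) (hqodd : Odd q)
    (h1 : p < q) (h2 : q ≤ p + Nat.sqrt (4 * (p - 2)) + 1)
    (g : ZMod (p * q)) (hg : addOrderOf g = p * q)
    (A : Finset (ZMod (p * q)))
    (hA : A = (Finset.Icc 1 ((p + q - 2) / 2)).image (fun i : ℕ => i • g) ∪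
              (Finset.Icc 1 ((p + q - 2) / 2)).image (fun i : ℕ => -(i • g)))
    (hAcard : A.card = p + q - 2) :
    (nss A : Set (ZMod (p * q))) ≠ Set.univ :=
  stmt16_general hpodd hqodd h1 h2 g A hA
end
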